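/- arXiv:0801.0649 — 2 statements merged into one kernel-verified Lean document; each statement's English description precedes it below -/
import Mathlib

section
/- The entanglement relation on qubits of a quantum register is transitive: if qubit x is entangled with qubit y, and y is entangled with z, then x is entangled with z. (Here x and y are called separable if there is a bipartition A, B of the qubits with x ∈ A, y ∈ B and states φ_A, φ_B such that the register state factors as φ_A ⊗ φ_B; they are entangled otherwise.) -/
/-- An `n`-qubit register state: amplitudes indexed by computational basis states. -/
abbrev QState (n : ℕ) := (Fin n → Fin 2) → ℂ

/-- `f` depends only on the qubits in `A`. -/
def QDependsOn {n : ℕ} (f : QState n) (A : Set (Fin n)) : Prop :=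
  ∀ x y : Fin n → Fin 2, (∀ k ∈ A, x k = y k) → f x = f y

/-- Qubits `i` and `j` are separable w.r.t. `φ`: there is a bipartition `A`, `Aᶜ`
separating them such that `φ` factors as a tensor product over the bipartition. -/
def SeparablePair {n : ℕ} (φ : QState n) (i j : Fin n) : Prop :=
  ∃ A : Set (Fin n), i ∈ A ∧ j ∉ A ∧
    ∃ f g : QState n, QDependsOn f A ∧ QDependsOn g Aᶜ ∧ ∀ x, φ x = f x * g x

/-- Qubits `i` and `j` are entangled iff they are not separable. -/
def EntangledPair {n : ℕ} (φ : QState n) (i j : Fin n) : Prop := ¬ SeparablePair φ i j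

/-- `φ` is a normalized state vector. -/
def Normalized {n : ℕ} (φ : QState n) : Prop :=
  ∑ x : Fin n → Fin 2, ‖φ x‖ ^ 2 = 1

theorem SeparablePair.cotrans {n : ℕ} {φ : QState n} {x z : Fin n} (h : SeparablePair φ x z)
    (y : Fin n) : SeparablePair φ x y ∨ SeparablePair φ y z := by
  obtain ⟨A, hxA, hzA, hfactor⟩ := h
  by_cases hyA : y ∈ A
  · exact .inr ⟨A, hyA, hzA, hfactor⟩
  · exact .inl ⟨A, hxA, hyA, hfactor⟩

theorem entangled_trans_general {n : ℕ} (φ : QState n) (x y z : Fin n)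
    (hxy : EntangledPair φ x y) (hyz : EntangledPair φ y z) :
    EntangledPair φ x z :=
  fun hxz => (hxz.cotrans y).elim hxy hyz

/-- the entanglement relation is transitive. -/
theorem entangled_trans {n : ℕ} (φ : QState n) (hφ : Normalized φ) (x y z : Fin n)
    (hxy : EntangledPair φ x y) (hyz : EntangledPair φ y z) :
    EntangledPair φ x z :=
  entangled_trans_general φ x y z hxy hyz
end

section
/- For the abstract quantum state semantics: if A = (⌣, P) is adequate for |φ⟩ (i.e., pairs not related by ⌣ are separable in |φ⟩ and qubits in P are in base states), then the abstract state A' = (⌣', P \ {i}) obtained by the abstract Hadamard rule is adequate for H_i|φ⟩, where ⌣' = ⌣, using that Hadamard acting on qubit i does not affect separability of pairs of qubits and does not create base states elsewhere. -/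
/-- Qubit `i` of `φ` is in a computational base state: `φ` factors as
`(indicator of qubit i being |b⟩) · g` with `g` not depending on qubit `i`. -/
def BaseAt {n : ℕ} (φ : QState n) (i : Fin n) : Prop :=
  ∃ (b : Fin 2) (g : QState n), QDependsOn g ({i}ᶜ) ∧
    ∀ x, φ x = (if x i = b then 1 else 0) * g x

/-- An abstract quantum state `(ent, P)` is adequate for `φ`: every pair of distinct
qubits not related by `ent` is separable, and every qubit in `P` is in a base state
(its measurement is deterministic). -/
def Adequate {n : ℕ} (ent : Fin n → Fin n → Prop) (P : Set (Fin n)) (φ : QState n) : Prop :=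
  (∀ x y : Fin n, x ≠ y → ¬ ent x y → SeparablePair φ x y) ∧
  (∀ x ∈ P, BaseAt φ x)

/-- Apply a single-qubit gate `U` to qubit `i` of an `n`-qubit state (i.e. `U_i ⊗ I`). -/
noncomputable def applyAt {n : ℕ} (U : Matrix (Fin 2) (Fin 2) ℂ) (i : Fin n)
    (φ : QState n) : QState n :=
  fun x => ∑ b : Fin 2, U (x i) b * φ (Function.update x i b)

/-- The Hadamard matrix `H = (1/√2)·[[1,1],[1,−1]]`. -/
noncomputable def Hmat : Matrix (Fin 2) (Fin 2) ℂ :=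
  ((Real.sqrt 2 : ℂ))⁻¹ • !![1, 1; 1, -1]

/-! A gate on qubit `i` acts only on the tensor factor that contains `i`: every product
decomposition `φ = f * g` with `g` independent of `i` survives as `U_i φ = (U_i f) * g`.
Hence separable pairs stay separable and base states at qubits `x ≠ i` persist, for any
single-qubit gate, not only the Hadamard gate. -/

namespace QDependsOn

variable {n : ℕ} {f : QState n} {A : Set (Fin n)}

lemma update_eq (hf : QDependsOn f A) {i : Fin n} (hi : i ∉ A) (x : Fin n → Fin 2)
    (b : Fin 2) : f (Function.update x i b) = f x :=
  hf _ _ fun _ hk => Function.update_of_ne (ne_of_mem_of_not_mem hk hi) b x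

lemma applyAt (hf : QDependsOn f A) (U : Matrix (Fin 2) (Fin 2) ℂ) {i : Fin n} (hi : i ∈ A) :
    QDependsOn (applyAt U i f) A := by
  intro x y hxy
  refine Finset.sum_congr rfl fun b _ => ?_
  rw [hxy i hi]
  congr 1
  refine hf _ _ fun k hk => ?_
  by_cases hki : k = i
  · simp [hki]
  · simp [Function.update_of_ne hki, hxy k hk]

end QDependsOn

section applyAt

variable {n : ℕ} (U : Matrix (Fin 2) (Fin 2) ℂ) {i : Fin n}

lemma applyAt_mul_of_dependsOn {f g : QState n} {B : Set (Fin n)} (hg : QDependsOn g B)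
    (hi : i ∉ B) : applyAt U i (f * g) = applyAt U i f * g := by
  funext x
  simp only [applyAt, Pi.mul_apply, Finset.sum_mul, hg.update_eq hi, mul_assoc]

lemma SeparablePair.applyAt {φ : QState n} {x y : Fin n} (h : SeparablePair φ x y) :
    SeparablePair (applyAt U i φ) x y := by
  obtain ⟨A, hxA, hyA, f, g, hf, hg, hfg⟩ := h
  have hφ : φ = f * g := funext hfg
  refine ⟨A, hxA, hyA, ?_⟩
  by_cases hiA : i ∈ A
  · refine ⟨_root_.applyAt U i f, g, hf.applyAt U hiA, hg, fun z => ?_⟩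
    rw [hφ, applyAt_mul_of_dependsOn U hg (Set.notMem_compl_iff.mpr hiA), Pi.mul_apply]
  · refine ⟨f, _root_.applyAt U i g, hf, hg.applyAt U hiA, fun z => ?_⟩
    rw [hφ, mul_comm, applyAt_mul_of_dependsOn U hf hiA, Pi.mul_apply, mul_comm]

lemma BaseAt.applyAt_of_ne {φ : QState n} {x : Fin n} (h : BaseAt φ x) (hix : i ≠ x) :
    BaseAt (applyAt U i φ) x := by
  obtain ⟨b, g, hg, hφg⟩ := h
  set e : QState n := fun z => if z x = b then 1 else 0
  have he : QDependsOn e {x} := fun z w hzw => by simp only [e, hzw x rfl]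
  have hφ : φ = g * e := funext fun z => (hφg z).trans (mul_comm _ _)
  refine ⟨b, _root_.applyAt U i g, hg.applyAt U hix, fun z => ?_⟩
  rw [hφ, applyAt_mul_of_dependsOn U he hix, Pi.mul_apply, mul_comm]

lemma Adequate.applyAt {ent : Fin n → Fin n → Prop} {P : Set (Fin n)} {φ : QState n}
    (h : Adequate ent P φ) : Adequate ent (P \ {i}) (applyAt U i φ) :=
  ⟨fun x y hxy hent => (h.1 x y hxy hent).applyAt U,
    fun x hx => (h.2 x hx.1).applyAt_of_ne U (Ne.symm hx.2)⟩

end applyAt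

theorem abstract_hadamard_sound_general {n : ℕ} (φ : QState n) (ent : Fin n → Fin n → Prop)
    (P : Set (Fin n)) (i : Fin n) (hA : Adequate ent P φ) :
    Adequate ent (P \ {i}) (applyAt Hmat i φ) :=
  hA.applyAt Hmat

/-- the abstract Hadamard rule is sound: if `(ent, P)` is adequate for
`φ`, then `(ent, P \ {i})` is adequate for `H_i|φ⟩`. -/
theorem abstract_hadamard_sound {n : ℕ} (φ : QState n) (ent : Fin n → Fin n → Prop)
    (P : Set (Fin n)) (i : Fin n) (hφ : Normalized φ) (hA : Adequate ent P φ) :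
    Adequate ent (P \ {i}) (applyAt Hmat i φ) :=
  abstract_hadamard_sound_general φ ent P i hA
end
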